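/- The language L over {a,b,c,d} consisting of all words w such that the number of a's in w equals the number of b's, the number of c's equals the number of d's, and in every prefix of w the number of a's is at least the number of b's and the number of c's is at least the number of d's, is not context-free. -/

import Mathlib

/-- The four-letter alphabet `{a, b, c, d}`. -/
inductive Bag : Type
  | a | b | c | d
deriving DecidableEq

/-- The trace language of the bag over a two-element value domain: words in
which the number of `a`'s equals the number of `b`'s, the number of `c`'s
equals the number of `d`'s, and in every prefix the number of `a`'s is at
least the number of `b`'s and the number of `c`'s is at least the number of
`d`'s. -/
def bagLanguage : Language Bag :=
  { w | w.count Bag.a = w.count Bag.b ∧ w.count Bag.c = w.count Bag.d ∧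
        ∀ p, p <+: w → p.count Bag.b ≤ p.count Bag.a ∧ p.count Bag.d ≤ p.count Bag.c }

/-!
A language generated by a context-free grammar has the pumping property: a parse tree of a long
word is tall, so on a longest branch some nonterminal repeats within bounded height; cutting out
or repeating the piece of tree between the two occurrences removes or repeats two short factors
`v`, `y` of the word, and for a parse tree of minimal size they are not both empty.

For the bag language pump down `aᵏ⁺¹ cᵏ⁺¹ bᵏ⁺¹ dᵏ⁺¹`. The window `v x y` has length at most
`k`, so it cannot meet both the `a`-block and the `b`-block, nor both the `c`-block and the
`d`-block. Since `u x z` is again balanced, `v y` contains as many `a`'s as `b`'s and as many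
`c`'s as `d`'s, hence no letters at all, a contradiction.
-/

universe uT uN

mutual
inductive ParseTree (T : Type uT) (N : Type uN) : Type (max uT uN)
  | node (A : N) (children : ParseForest T N) : ParseTree T N
inductive ParseForest (T : Type uT) (N : Type uN) : Type (max uT uN)
  | nil : ParseForest T N
  | consT (a : T) (f : ParseForest T N) : ParseForest T N
  | consN (t : ParseTree T N) (f : ParseForest T N) : ParseForest T N
end

variable {T : Type uT} {N : Type uN} {g : ContextFreeGrammar T}

open ContextFreeGrammar

def ParseTree.root : ParseTree T N → N
  | .node A _ => A

mutual
def ParseTree.yield : ParseTree T N → List T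
  | .node _ f => f.yield
def ParseForest.yield : ParseForest T N → List T
  | .nil => []
  | .consT a f => a :: f.yield
  | .consN t f => t.yield ++ f.yield
end

def ParseForest.symbols : ParseForest T N → List (Symbol T N)
  | .nil => []
  | .consT a f => .terminal a :: f.symbols
  | .consN t f => .nonterminal t.root :: f.symbols

mutual
def ParseTree.height : ParseTree T N → ℕ
  | .node _ f => f.height + 1
def ParseForest.height : ParseForest T N → ℕ
  | .nil => 0
  | .consT _ f => f.height
  | .consN t f => max t.height f.height
end

mutual
def ParseTree.size : ParseTree T N → ℕ
  | .node _ f => f.size + 1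
def ParseForest.size : ParseForest T N → ℕ
  | .nil => 0
  | .consT _ f => f.size
  | .consN t f => t.size + f.size
end

def ParseForest.append : ParseForest T N → ParseForest T N → ParseForest T N
  | .nil, f₂ => f₂
  | .consT a f, f₂ => .consT a (f.append f₂)
  | .consN t f, f₂ => .consN t (f.append f₂)

@[simp]
theorem ParseForest.symbols_append : ∀ f₁ f₂ : ParseForest T N,
    (f₁.append f₂).symbols = f₁.symbols ++ f₂.symbols
  | .nil, _ => rfl
  | .consT _ f, f₂ => congrArg (_ :: ·) (symbols_append f f₂)
  | .consN _ f, f₂ => congrArg (_ :: ·) (symbols_append f f₂)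

@[simp]
theorem ParseForest.yield_append : ∀ f₁ f₂ : ParseForest T N,
    (f₁.append f₂).yield = f₁.yield ++ f₂.yield
  | .nil, _ => rfl
  | .consT a f, f₂ => congrArg (a :: ·) (yield_append f f₂)
  | .consN t f, f₂ => by simp [append, yield, yield_append f f₂]

theorem ParseForest.exists_append_of_symbols_eq_append :
    ∀ {f : ParseForest T N} {X Y : List (Symbol T N)}, f.symbols = X ++ Y →
      ∃ f₁ f₂ : ParseForest T N,
        f = f₁.append f₂ ∧ f₁.symbols = X ∧ f₂.symbols = Y
  | f, [], _, h => ⟨.nil, f, rfl, rfl, h⟩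
  | .consT a f, _ :: X, _, h => by
    obtain ⟨rfl, hf⟩ := List.cons_eq_cons.1 h
    obtain ⟨f₁, f₂, rfl, rfl, rfl⟩ := exists_append_of_symbols_eq_append hf
    exact ⟨.consT a f₁, f₂, rfl, rfl, rfl⟩
  | .consN t f, _ :: X, _, h => by
    obtain ⟨rfl, hf⟩ := List.cons_eq_cons.1 h
    obtain ⟨f₁, f₂, rfl, rfl, rfl⟩ := exists_append_of_symbols_eq_append hf
    exact ⟨.consN t f₁, f₂, rfl, rfl, rfl⟩

mutual
/-- `t.Contains s v y`: `s` is a subtree of `t`, and `v`, `y` are the parts of `t.yield` to the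
left and to the right of it. -/
inductive ParseTree.Contains : ParseTree T N → ParseTree T N → List T → List T → Prop
  | refl (t : ParseTree T N) : ParseTree.Contains t t [] []
  | node {f : ParseForest T N} {s : ParseTree T N} {v y : List T} (A : N) :
      ParseForest.Contains f s v y → ParseTree.Contains (.node A f) s v y
inductive ParseForest.Contains : ParseForest T N → ParseTree T N → List T → List T → Prop
  | head {t : ParseTree T N} {f : ParseForest T N} {s : ParseTree T N} {v y : List T} :
      ParseTree.Contains t s v y → ParseForest.Contains (.consN t f) s v (y ++ f.yield)
  | consT {a : T} {f : ParseForest T N} {s : ParseTree T N} {v y : List T} :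
      ParseForest.Contains f s v y → ParseForest.Contains (.consT a f) s (a :: v) y
  | consN {t : ParseTree T N} {f : ParseForest T N} {s : ParseTree T N} {v y : List T} :
      ParseForest.Contains f s v y → ParseForest.Contains (.consN t f) s (t.yield ++ v) y
end

mutual
theorem ParseTree.Contains.yield_eq {t s : ParseTree T N} {v y : List T} :
    t.Contains s v y → t.yield = v ++ s.yield ++ y
  | .refl _ => by simp
  | .node _ hf => hf.yield_eq
theorem ParseForest.Contains.yield_eq {f : ParseForest T N} {s : ParseTree T N} {v y : List T} :
    f.Contains s v y → f.yield = v ++ s.yield ++ y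
  | .head ht => by simp [ParseForest.yield, ht.yield_eq]
  | .consT hf => by simp [ParseForest.yield, hf.yield_eq]
  | .consN hf => by simp [ParseForest.yield, hf.yield_eq]
end

mutual
theorem ParseTree.Contains.size_le {t s : ParseTree T N} {v y : List T} :
    t.Contains s v y → s.size ≤ t.size
  | .refl _ => le_rfl
  | .node _ hf => hf.size_le.trans (Nat.le_succ _)
theorem ParseForest.Contains.size_le {f : ParseForest T N} {s : ParseTree T N} {v y : List T} :
    f.Contains s v y → s.size ≤ f.size
  | .head ht => ht.size_le.trans (Nat.le_add_right _ _)
  | .consT hf => hf.size_le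
  | .consN hf => hf.size_le.trans (Nat.le_add_left _ _)
end

mutual
theorem ParseTree.Contains.trans {t s s' : ParseTree T N} {v y v' y' : List T} :
    t.Contains s v y → s.Contains s' v' y' → t.Contains s' (v ++ v') (y' ++ y)
  | .refl _, h' => by simpa using h'
  | .node A hf, h' => .node A (hf.trans h')
theorem ParseForest.Contains.trans {f : ParseForest T N} {s s' : ParseTree T N}
    {v y v' y' : List T} :
    f.Contains s v y → s.Contains s' v' y' → f.Contains s' (v ++ v') (y' ++ y)
  | .head ht, h' => by simpa using ParseForest.Contains.head (ht.trans h')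
  | .consT hf, h' => .consT (hf.trans h')
  | .consN hf, h' => by simpa using ParseForest.Contains.consN (hf.trans h')
end

theorem ParseForest.exists_contains_height_eq :
    ∀ f : ParseForest T N, f.height ≠ 0 →
      ∃ (t : ParseTree T N) (v y : List T), f.Contains t v y ∧ t.height = f.height
  | .nil, hf => absurd rfl hf
  | .consT _ f, hf =>
    let ⟨t, v, y, h, ht⟩ := exists_contains_height_eq f hf
    ⟨t, _, y, .consT h, ht⟩
  | .consN t f, _ => by
    rcases le_or_gt f.height t.height with hle | hlt
    · exact ⟨t, [], f.yield, .head (.refl t), (max_eq_left hle).symm⟩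
    · obtain ⟨t', v, y, h, ht'⟩ := exists_contains_height_eq f (by omega)
      exact ⟨t', _, y, .consN h, ht'.trans (max_eq_right hlt.le).symm⟩

/-- Some node of `t` of height at most `h` has a proper descendant with the same label. -/
def ParseTree.HasRepeatedRoot (t : ParseTree T N) (h : ℕ) : Prop :=
  ∃ (A : N) (f : ParseForest T N) (s : ParseTree T N) (u z v y : List T),
    t.Contains (.node A f) u z ∧ f.Contains s v y ∧ s.root = A ∧
      (ParseTree.node A f).height ≤ h

theorem ParseTree.HasRepeatedRoot.of_contains {t s : ParseTree T N} {v y : List T} {h : ℕ}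
    (hs : s.HasRepeatedRoot h) (hts : t.Contains s v y) : t.HasRepeatedRoot h :=
  let ⟨A, f, s', _, _, v', y', h₁, h₂, h₃, h₄⟩ := hs
  ⟨A, f, s', _, _, v', y', hts.trans h₁, h₂, h₃, h₄⟩

theorem ParseTree.HasRepeatedRoot.mono {t : ParseTree T N} {h h' : ℕ} (ht : t.HasRepeatedRoot h)
    (hh : h ≤ h') : t.HasRepeatedRoot h' :=
  let ⟨A, f, s, u, z, v, y, h₁, h₂, h₃, h₄⟩ := ht
  ⟨A, f, s, u, z, v, y, h₁, h₂, h₃, h₄.trans hh⟩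

/-- Pigeonhole along a highest branch of `t`; `R` holds the labels not yet met on it. -/
theorem ParseTree.exists_root_notMem_or_hasRepeatedRoot (t : ParseTree T N) (R : Finset N)
    (hR : R.card < t.height) :
    (∃ s v y, t.Contains s v y ∧ s.root ∉ R) ∨ t.HasRepeatedRoot (R.card + 1) := by
  classical
  match t with
  | .node A f =>
    simp only [height] at hR
    by_cases hhigh : R.card < f.height
    · obtain ⟨p, v, y, hp, hph⟩ := f.exists_contains_height_eq (by omega)
      have hp' : (node A f).Contains p v y := .node A hp
      rcases exists_root_notMem_or_hasRepeatedRoot p R (hph ▸ hhigh) with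
        ⟨s, v', y', hs, hsR⟩ | hrep
      · exact .inl ⟨s, _, _, hp'.trans hs, hsR⟩
      · exact .inr (hrep.of_contains hp')
    by_cases hA : A ∈ R
    · have hcard := Finset.card_erase_of_mem hA
      have hpos : 0 < R.card := Finset.card_pos.2 ⟨A, hA⟩
      obtain ⟨p, v, y, hp, hph⟩ := f.exists_contains_height_eq (by omega)
      have hp' : (node A f).Contains p v y := .node A hp
      rcases exists_root_notMem_or_hasRepeatedRoot p (R.erase A) (by omega) with
        ⟨s, v', y', hs, hsR⟩ | hrep
      · by_cases hsA : s.root = A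
        · exact .inr ⟨A, f, s, [], [], _, _, .refl _, hp.trans hs, hsA,
            by simp only [height]; omega⟩
        · exact .inl ⟨s, _, _, hp'.trans hs, fun h => hsR (Finset.mem_erase.2 ⟨hsA, h⟩)⟩
      · exact .inr ((hrep.of_contains hp').mono (by omega))
    · exact .inl ⟨_, [], [], .refl _, hA⟩
termination_by t.height
decreasing_by all_goals simp only [height]; omega

mutual
def ParseTree.Valid (g : ContextFreeGrammar T) : ParseTree T g.NT → Prop
  | .node A f => ⟨A, f.symbols⟩ ∈ g.rules ∧ f.Valid g
def ParseForest.Valid (g : ContextFreeGrammar T) : ParseForest T g.NT → Prop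
  | .nil => True
  | .consT _ f => f.Valid g
  | .consN t f => t.Valid g ∧ f.Valid g
end

theorem ParseTree.Valid.root_mem [DecidableEq g.NT] :
    ∀ {t : ParseTree T g.NT}, t.Valid g → t.root ∈ g.rules.image ContextFreeRule.input
  | .node _ _, ⟨hr, _⟩ => Finset.mem_image_of_mem _ hr

theorem ParseForest.valid_append : ∀ f₁ f₂ : ParseForest T g.NT,
    (f₁.append f₂).Valid g ↔ f₁.Valid g ∧ f₂.Valid g
  | .nil, _ => by simp [append, Valid]
  | .consT _ f, f₂ => valid_append f f₂
  | .consN _ f, f₂ => by simp only [append, Valid, valid_append f f₂, and_assoc]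

mutual
theorem ParseTree.Valid.derives : ∀ {t : ParseTree T g.NT}, t.Valid g →
    g.Derives [.nonterminal t.root] (t.yield.map .terminal)
  | .node _ _, ⟨hr, hf⟩ =>
    Produces.trans_derives ⟨_, hr, ContextFreeRule.Rewrites.input_output⟩ hf.derives
theorem ParseForest.Valid.derives : ∀ {f : ParseForest T g.NT}, f.Valid g →
    g.Derives f.symbols (f.yield.map .terminal)
  | .nil, _ => Derives.refl _
  | .consT a f, (hf : f.Valid g) => hf.derives.append_left [.terminal a]
  | .consN t f, ⟨ht, hf⟩ => by
    simpa [ParseForest.symbols, ParseForest.yield] using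
      (ht.derives.append_right f.symbols).trans (hf.derives.append_left _)
end

theorem ParseForest.exists_terminals (w : List T) :
    ∃ f : ParseForest T g.NT, f.Valid g ∧ f.symbols = w.map .terminal ∧ f.yield = w := by
  induction w with
  | nil => exact ⟨.nil, trivial, rfl, rfl⟩
  | cons a w ih =>
    obtain ⟨f, hf, hs, hy⟩ := ih
    exact ⟨.consT a f, hf, by simp [symbols, hs], by simp [yield, hy]⟩

theorem ParseForest.exists_of_derives {α : List (Symbol T g.NT)} {w : List T}
    (h : g.Derives α (w.map .terminal)) :
    ∃ f : ParseForest T g.NT, f.Valid g ∧ f.symbols = α ∧ f.yield = w := by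
  induction h using Relation.ReflTransGen.head_induction_on with
  | refl => exact exists_terminals w
  | head hp _ ih =>
    obtain ⟨f, hf, hs, rfl⟩ := ih
    obtain ⟨r, hr, hrw⟩ := hp
    obtain ⟨p, q, rfl, rfl⟩ := hrw.exists_parts
    obtain ⟨f₁, f₂₃, rfl, hs₁, hs₂₃⟩ :=
      exists_append_of_symbols_eq_append (X := p) (by simpa using hs)
    obtain ⟨f₂, f₃, rfl, hs₂, hs₃⟩ := exists_append_of_symbols_eq_append hs₂₃
    simp only [valid_append] at hf
    refine ⟨f₁.append (.consN (.node r.input f₂) f₃), ?_, ?_, ?_⟩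
    · exact (valid_append _ _).2 ⟨hf.1, ⟨hs₂ ▸ hr, hf.2.1⟩, hf.2.2⟩
    · simp [symbols, ParseTree.root, hs₁, hs₃]
    · simp [yield, ParseTree.yield]

theorem ContextFreeGrammar.mem_language_iff_exists_parseTree {w : List T} :
    w ∈ g.language ↔
      ∃ t : ParseTree T g.NT, t.Valid g ∧ t.root = g.initial ∧ t.yield = w := by
  constructor
  · intro hw
    obtain ⟨f, hf, hs, rfl⟩ := ParseForest.exists_of_derives ((mem_language_iff g w).1 hw)
    match f, hs with
    | .consN t .nil, hs =>
      exact ⟨t, hf.1, Symbol.nonterminal.inj (List.cons_eq_cons.1 hs).1,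
        by simp [ParseForest.yield]⟩
    | .consN _ (.consT _ _), hs | .consN _ (.consN _ _), hs => simp [ParseForest.symbols] at hs
  · rintro ⟨t, ht, hroot, rfl⟩
    exact (mem_language_iff g _).2 (hroot ▸ ht.derives)

mutual
theorem ParseTree.Contains.valid {t s : ParseTree T g.NT} {v y : List T} :
    t.Contains s v y → t.Valid g → s.Valid g
  | .refl _, ht => ht
  | .node _ hf, ht => hf.valid ht.2
theorem ParseForest.Contains.valid {f : ParseForest T g.NT} {s : ParseTree T g.NT}
    {v y : List T} : f.Contains s v y → f.Valid g → s.Valid g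
  | .head ht, hf => ht.valid hf.1
  | .consT hf', hf => hf'.valid hf
  | .consN hf', hf => hf'.valid hf.2
end

mutual
theorem ParseTree.Contains.exists_replace {t s : ParseTree T g.NT} {v y : List T}
    (h : t.Contains s v y) (ht : t.Valid g) {s' : ParseTree T g.NT} (hs' : s'.Valid g)
    (hroot : s'.root = s.root) :
    ∃ t' : ParseTree T g.NT, t'.Valid g ∧ t'.root = t.root ∧ t'.yield = v ++ s'.yield ++ y ∧
      t'.size + s.size = t.size + s'.size :=
  match h, ht with
  | .refl _, _ => ⟨s', hs', hroot, by simp, by omega⟩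
  | .node A hf, ⟨hr, hfv⟩ =>
    let ⟨f', hf'v, hsym, hy, hsize⟩ := hf.exists_replace hfv hs' hroot
    ⟨.node A f', ⟨hsym ▸ hr, hf'v⟩, rfl, hy, by simp only [ParseTree.size]; omega⟩
theorem ParseForest.Contains.exists_replace {f : ParseForest T g.NT} {s : ParseTree T g.NT}
    {v y : List T} (h : f.Contains s v y) (hf : f.Valid g) {s' : ParseTree T g.NT}
    (hs' : s'.Valid g) (hroot : s'.root = s.root) :
    ∃ f' : ParseForest T g.NT, f'.Valid g ∧ f'.symbols = f.symbols ∧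
      f'.yield = v ++ s'.yield ++ y ∧ f'.size + s.size = f.size + s'.size :=
  match h, hf with
  | .head (f := f) ht, ⟨htv, hfv⟩ =>
    let ⟨t', ht'v, hr, hy, hsize⟩ := ht.exists_replace htv hs' hroot
    ⟨.consN t' f, ⟨ht'v, hfv⟩, by simp [ParseForest.symbols, hr],
      by simp [ParseForest.yield, hy], by simp only [ParseForest.size]; omega⟩
  | .consT (a := a) hf', hfv =>
    let ⟨f', hf'v, hsym, hy, hsize⟩ := hf'.exists_replace hfv hs' hroot
    ⟨.consT a f', hf'v, by simp [ParseForest.symbols, hsym], by simp [ParseForest.yield, hy],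
      by simp only [ParseForest.size]; omega⟩
  | .consN (t := t) hf', ⟨htv, hfv⟩ =>
    let ⟨f', hf'v, hsym, hy, hsize⟩ := hf'.exists_replace hfv hs' hroot
    ⟨.consN t f', ⟨htv, hf'v⟩, by simp [ParseForest.symbols, hsym],
      by simp [ParseForest.yield, hy], by simp only [ParseForest.size]; omega⟩
end

theorem ParseTree.Contains.exists_iterate {t s : ParseTree T g.NT} {v y : List T}
    (h : t.Contains s v y) (ht : t.Valid g) (hroot : s.root = t.root) (n : ℕ) :
    ∃ τ : ParseTree T g.NT, τ.Valid g ∧ τ.root = t.root ∧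
      τ.yield = (List.replicate n v).flatten ++ s.yield ++ (List.replicate n y).flatten := by
  induction n with
  | zero => exact ⟨s, h.valid ht, hroot, by simp⟩
  | succ n ih =>
    obtain ⟨τ, hτ, hτroot, hτy⟩ := ih
    obtain ⟨τ', hτ', hτ'root, hτ'y, -⟩ := h.exists_replace ht hτ (hτroot.trans hroot.symm)
    refine ⟨τ', hτ', hτ'root, ?_⟩
    rw [hτ'y, hτy, List.replicate_succ, List.replicate_succ', List.flatten_cons,
      List.flatten_append]
    simp

mutual
theorem ParseTree.Valid.length_yield_le {M : ℕ} (hM : 1 ≤ M)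
    (hrules : ∀ r ∈ g.rules, r.output.length ≤ M) :
    ∀ {t : ParseTree T g.NT}, t.Valid g → t.yield.length ≤ M ^ t.height
  | .node _ f, ⟨hr, hf⟩ =>
    calc f.yield.length ≤ f.symbols.length * M ^ f.height := hf.length_yield_le hM hrules
      _ ≤ M * M ^ f.height := Nat.mul_le_mul_right _ (hrules _ hr)
      _ = M ^ (f.height + 1) := (pow_succ' M _).symm
theorem ParseForest.Valid.length_yield_le {M : ℕ} (hM : 1 ≤ M)
    (hrules : ∀ r ∈ g.rules, r.output.length ≤ M) :
    ∀ {f : ParseForest T g.NT}, f.Valid g → f.yield.length ≤ f.symbols.length * M ^ f.height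
  | .nil, _ => by simp [ParseForest.yield]
  | .consT a f, (hf : f.Valid g) => by
    have := hf.length_yield_le hM hrules
    have := Nat.one_le_pow f.height M hM
    simp only [ParseForest.yield, ParseForest.symbols, ParseForest.height, List.length_cons]
    nlinarith
  | .consN t f, ⟨ht, hf⟩ => by
    have := ht.length_yield_le hM hrules
    have := hf.length_yield_le hM hrules
    have := Nat.pow_le_pow_right hM (le_max_left t.height f.height)
    have := Nat.pow_le_pow_right hM (le_max_right t.height f.height)
    simp only [ParseForest.yield, ParseForest.symbols, ParseForest.height, List.length_cons,
      List.length_append]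
    nlinarith
end

theorem ContextFreeGrammar.pumping_lemma (g : ContextFreeGrammar T) :
    ∃ k : ℕ, ∀ w ∈ g.language, k < w.length →
      ∃ u v x y z : List T, w = u ++ v ++ x ++ y ++ z ∧ v ++ y ≠ [] ∧
        (v ++ x ++ y).length ≤ k ∧
        ∀ n : ℕ, u ++ (List.replicate n v).flatten ++ x ++ (List.replicate n y).flatten ++ z ∈
          g.language := by
  classical
  obtain ⟨M, hM, hrules⟩ : ∃ M, 2 ≤ M ∧ ∀ r ∈ g.rules, r.output.length ≤ M :=
    ⟨g.rules.sup (fun r => r.output.length) + 2, by omega,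
      fun r hr => (Finset.le_sup (f := fun r => r.output.length) hr).trans (by omega)⟩
  set R := g.rules.image ContextFreeRule.input
  refine ⟨M ^ (R.card + 1), fun w hw hlen => ?_⟩
  -- a parse tree of minimal size, so that `v` and `y` cannot both be empty
  obtain ⟨t, ⟨ht, hroot, rfl⟩, hmin⟩ := (measure ParseTree.size).wf.has_min
    {t | t.Valid g ∧ t.root = g.initial ∧ t.yield = w} (mem_language_iff_exists_parseTree.1 hw)
  have hR : R.card < t.height := by
    have := (Nat.pow_lt_pow_iff_right (by omega)).1
      (hlen.trans_le (ht.length_yield_le (by omega) hrules))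
    omega
  obtain ⟨A, f, s, u, z, v, y, hAf, hs, hsA, hheight⟩ :=
    (t.exists_root_notMem_or_hasRepeatedRoot R hR).resolve_left
      fun ⟨_, _, _, hts, hsR⟩ => hsR (hts.valid ht).root_mem
  have hAfv : (ParseTree.node A f).Valid g := hAf.valid ht
  have hAfs : (ParseTree.node A f).Contains s v y := .node A hs
  refine ⟨u, v, s.yield, y, z, by simp [hAf.yield_eq, hAfs.yield_eq], ?_, ?_, fun n => ?_⟩
  · intro hvy
    obtain ⟨rfl, rfl⟩ := List.append_eq_nil_iff.1 hvy
    obtain ⟨t', ht', ht'root, ht'y, hsize⟩ := hAf.exists_replace ht (hs.valid hAfv.2) hsA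
    refine hmin t' ⟨ht', ht'root.trans hroot, by simp [ht'y, hAf.yield_eq, hAfs.yield_eq]⟩ ?_
    have := hs.size_le
    simp only [ParseTree.size] at hsize
    change t'.size < t.size
    omega
  · calc (v ++ s.yield ++ y).length = (ParseTree.node A f).yield.length := by rw [hAfs.yield_eq]
      _ ≤ M ^ (ParseTree.node A f).height := hAfv.length_yield_le (by omega) hrules
      _ ≤ M ^ (R.card + 1) := Nat.pow_le_pow_right (by omega) hheight
  · obtain ⟨τ, hτ, hτroot, hτy⟩ := hAfs.exists_iterate hAfv hsA n
    obtain ⟨t', ht', ht'root, ht'y, -⟩ := hAf.exists_replace ht hτ hτroot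
    exact mem_language_iff_exists_parseTree.2
      ⟨t', ht', ht'root.trans hroot, by simp [ht'y, hτy]⟩

theorem List.length_lt_of_append_eq_append_of_mem {α : Type*} {p s q X R : List α} {a : α}
    (h : p ++ s ++ q = X ++ R) (ha : a ∈ s) (haR : a ∉ R) : p.length < X.length := by
  rw [List.append_assoc, List.append_eq_append_iff] at h
  rcases h with ⟨_ | _, rfl, hR⟩ | ⟨_, rfl, rfl⟩
  · exact absurd (hR ▸ List.mem_append_left q ha) (by simpa using haR)
  · simp
  · exact absurd (by simp [ha]) haR

theorem List.IsInfix.length_lt_of_mem_of_mem {α : Type*} {s X Y Z : List α}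
    (hs : s <:+: X ++ Y ++ Z) {a b : α} (ha : a ∈ s) (haYZ : a ∉ Y ++ Z) (hb : b ∈ s)
    (hbXY : b ∉ X ++ Y) : Y.length < s.length := by
  obtain ⟨p, q, h⟩ := hs
  have hp := List.length_lt_of_append_eq_append_of_mem (h.trans (List.append_assoc _ _ _)) ha haYZ
  have hq := List.length_lt_of_append_eq_append_of_mem (R := (X ++ Y).reverse)
    (by simpa using congrArg List.reverse h) (List.mem_reverse.2 hb)
    (by simpa [and_comm] using hbXY)
  have hlen := congrArg List.length h
  simp only [List.length_append, List.length_reverse] at hp hq hlen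
  omega

theorem List.IsPrefix.count_le_count {α : Type*} [BEq α] [LawfulBEq α] {p A w : List α}
    {a b : α} (hp : p <+: w) (hA : A <+: w) (hbA : b ∉ A) (hbw : w.count b ≤ A.count a) :
    p.count b ≤ p.count a := by
  rcases List.prefix_or_prefix_of_prefix hp hA with hpA | hAp
  · have := hpA.sublist.count_le b
    rw [List.count_eq_zero.2 hbA] at this
    omega
  · exact (hp.sublist.count_le b).trans (hbw.trans (hAp.sublist.count_le a))

def bagWord (k : ℕ) : List Bag :=
  .replicate k .a ++ .replicate k .c ++ .replicate k .b ++ .replicate k .d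

@[simp]
theorem count_bagWord (k : ℕ) (e : Bag) : (bagWord k).count e = k := by
  cases e <;> simp [bagWord, List.count_replicate]

theorem bagWord_mem (k : ℕ) : bagWord k ∈ bagLanguage := by
  refine ⟨by simp, by simp, fun p hp => ⟨?_, ?_⟩⟩
  · exact hp.count_le_count (A := .replicate k .a ++ .replicate k .c)
      ⟨.replicate k .b ++ .replicate k .d, by simp [bagWord]⟩
      (by simp [List.mem_replicate]) (by simp [List.count_replicate])
  · exact hp.count_le_count (A := .replicate k .a ++ .replicate k .c ++ .replicate k .b)
      ⟨_, rfl⟩ (by simp [List.mem_replicate]) (by simp [List.count_replicate])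

theorem eq_nil_of_sublist_of_isInfix_bagWord {k : ℕ} {s m : List Bag} (hsm : s.Sublist m)
    (hm : m <:+: bagWord k) (hlen : m.length ≤ k) (hab : s.count .a = s.count .b)
    (hcd : s.count .c = s.count .d) : s = [] := by
  have hab' : Bag.a ∉ m ∨ Bag.b ∉ m := by
    by_contra! h
    have := List.IsInfix.length_lt_of_mem_of_mem (X := .replicate k .a) (Y := .replicate k .c)
      (by simpa [bagWord] using hm) h.1 (by simp [List.mem_replicate]) h.2
      (by simp [List.mem_replicate])
    simp only [List.length_replicate] at this
    omega
  have hcd' : Bag.c ∉ m ∨ Bag.d ∉ m := by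
    by_contra! h
    have := List.IsInfix.length_lt_of_mem_of_mem (Y := .replicate k .b) hm h.1
      (by simp [List.mem_replicate]) h.2 (by simp [List.mem_replicate])
    simp only [List.length_replicate] at this
    omega
  have hzero : ∀ x y : Bag, s.count x = s.count y → x ∉ m ∨ y ∉ m →
      s.count x = 0 ∧ s.count y = 0 := by
    rintro x y hxy (h | h) <;>
      have := List.count_eq_zero.2 fun hs => h (hsm.subset hs) <;> omega
  obtain ⟨ha, hb⟩ := hzero _ _ hab hab'
  obtain ⟨hc, hd⟩ := hzero _ _ hcd hcd'
  refine List.eq_nil_iff_forall_not_mem.2 fun e => List.count_eq_zero.1 ?_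
  cases e <;> assumption

/-- The bag language is not context-free. -/
theorem bagLanguage_not_contextFree : ¬ bagLanguage.IsContextFree := by
  rintro ⟨g, hg⟩
  obtain ⟨k, hk⟩ := g.pumping_lemma
  obtain ⟨u, v, x, y, z, hw, hvy, hlen, hpump⟩ :=
    hk (bagWord (k + 1)) (hg ▸ bagWord_mem (k + 1))
      (by simp only [bagWord, List.length_append, List.length_replicate]; omega)
  obtain ⟨hab, hcd, -⟩ : u ++ x ++ z ∈ bagLanguage := by simpa [hg] using hpump 0
  have hcount (e : Bag) : (u ++ x ++ z).count e + (v ++ y).count e = k + 1 := by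
    rw [← count_bagWord (k + 1) e, hw]
    simp only [List.count_append]
    omega
  refine hvy (eq_nil_of_sublist_of_isInfix_bagWord (k := k + 1) (m := v ++ x ++ y) (by simp)
    ⟨u, z, by simp [hw]⟩ (by omega) ?_ ?_)
  · have := hcount .a; have := hcount .b; omega
  · have := hcount .c; have := hcount .d; omega
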